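/- Let k, m and D be positive integers and let G be a graph. Suppose that for every k-coloring α of G there exists a k-coloring α′ of G such that α′ uses only colors from {1,…,k−1} and the distance from α to α′ in R_k(G) is at most m. Then for every independent set I in G, if the reconfiguration graph R_{k−1}(G−I) has diameter at most D, the reconfiguration graph R_k(G) has diameter at most 2(m + |I|) + D. -/

import Mathlib

/-- A `k`-coloring of `G` is a proper coloring with colors in `Fin k`. -/
def ProperKColoring {V : Type*} (G : SimpleGraph V) (k : ℕ) :=
  {φ : V → Fin k // ∀ u v : V, G.Adj u v → φ u ≠ φ v}

/-- The reconfiguration graph `R_k(G)`: vertices are the proper `k`-colorings of `G`,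
two colorings being adjacent if they differ in the color of exactly one vertex. -/
def recolorGraph {V : Type*} (G : SimpleGraph V) (k : ℕ) :
    SimpleGraph (ProperKColoring G k) where
  Adj α β := ∃ x : V, α.1 x ≠ β.1 x ∧ ∀ y : V, y ≠ x → α.1 y = β.1 y
  symm := by
    refine ⟨?_⟩
    rintro α β ⟨x, hx, h⟩
    exact ⟨x, hx.symm, fun y hy => (h y hy).symm⟩
  loopless := by
    refine ⟨?_⟩
    rintro α ⟨x, hx, _⟩
    exact hx rfl

section Aux

variable {V : Type*} [Fintype V] [DecidableEq V] (G : SimpleGraph V)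
  (k : ℕ) (hk : 1 ≤ k) (I : Finset V)

/-- Lift a `(k-1)`-coloring of `G - I` to a `k`-coloring of `G` giving the last color to `I`. -/
def liftColoring (hI : ∀ u ∈ I, ∀ v ∈ I, ¬ G.Adj u v)
    (δ : ProperKColoring (G.induce ((I : Set V)ᶜ)) (k - 1)) : ProperKColoring G k :=
  ⟨fun v => if h : v ∈ I then (⟨k - 1, by omega⟩ : Fin k)
    else Fin.castLE (by omega) (δ.1 ⟨v, by simpa using h⟩), by
    intro u v hadj
    by_cases hu : u ∈ I <;> by_cases hv : v ∈ I <;> simp only [hu, hv, dif_pos, dif_neg,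
      not_false_iff]
    · exact absurd hadj (hI u hu v hv)
    · intro h
      have := (δ.1 ⟨v, by simpa using hv⟩).isLt
      have h2 := congrArg Fin.val h
      simp [Fin.castLE] at h2
      omega
    · intro h
      have := (δ.1 ⟨u, by simpa using hu⟩).isLt
      have h2 := congrArg Fin.val h
      simp [Fin.castLE] at h2
      omega
    · intro h
      have hadj' : (G.induce ((I : Set V)ᶜ)).Adj ⟨u, by simpa using hu⟩ ⟨v, by simpa using hv⟩ := by
        simpa using hadj
      exact δ.2 _ _ hadj' (Fin.castLE_injective _ h)⟩

/-- The lifting as a graph homomorphism between reconfiguration graphs. -/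
def liftHom (hI : ∀ u ∈ I, ∀ v ∈ I, ¬ G.Adj u v) :
    recolorGraph (G.induce ((I : Set V)ᶜ)) (k - 1) →g recolorGraph G k where
  toFun := liftColoring G k hk I hI
  map_rel' := by
    rintro δ δ' ⟨x, hx, h⟩
    refine ⟨x.1, ?_, ?_⟩
    · have hxI : x.1 ∉ I := fun hmem => x.2 (Finset.mem_coe.mpr hmem)
      simp only [liftColoring, dif_neg hxI]
      intro e
      exact hx (Fin.castLE_injective _ e)
    · intro y hy
      by_cases hyI : y ∈ I
      · simp [liftColoring, dif_pos hyI]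
      · simp only [liftColoring, dif_neg hyI]
        congr 1
        exact h ⟨y, by simpa using hyI⟩ (fun e => hy (congrArg Subtype.val e))

/-- Restrict a `k`-coloring of `G` avoiding the last color to a `(k-1)`-coloring of `G - I`. -/
def restrictColoring (β : ProperKColoring G k) (hβ : ∀ v, (β.1 v : ℕ) < k - 1) :
    ProperKColoring (G.induce ((I : Set V)ᶜ)) (k - 1) :=
  ⟨fun x => ⟨(β.1 x.1).val, hβ _⟩, by
    intro u v hadj h
    have hadj' : G.Adj u.1 v.1 := by simpa using hadj
    exact β.2 _ _ hadj' (Fin.ext (by simpa using congrArg Fin.val h))⟩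

lemma push_proper (hI : ∀ u ∈ I, ∀ v ∈ I, ¬ G.Adj u v)
    (β : ProperKColoring G k) (hβ : ∀ v, (β.1 v : ℕ) < k - 1)
    (S : Finset V) (hS : S ⊆ I) :
    ∀ u v : V, G.Adj u v →
      (if u ∈ S then (⟨k - 1, by omega⟩ : Fin k) else β.1 u) ≠
      (if v ∈ S then (⟨k - 1, by omega⟩ : Fin k) else β.1 v) := by
  intro u v hadj
  by_cases hu : u ∈ S <;> by_cases hv : v ∈ S <;> simp only [hu, hv, if_pos, if_neg,
    not_false_iff]
  · exact absurd hadj (hI u (hS hu) v (hS hv))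
  · intro h
    have := hβ v
    have h2 := congrArg Fin.val h
    simp at h2
    omega
  · intro h
    have := hβ u
    have h2 := congrArg Fin.val h
    simp at h2
    omega
  · exact β.2 u v hadj

lemma push_walk (hI : ∀ u ∈ I, ∀ v ∈ I, ¬ G.Adj u v)
    (β : ProperKColoring G k) (hβ : ∀ v, (β.1 v : ℕ) < k - 1) :
    ∀ S : Finset V, ∀ hS : S ⊆ I,
      ∃ p : (recolorGraph G k).Walk β
        ⟨fun v => if v ∈ S then (⟨k - 1, by omega⟩ : Fin k) else β.1 v,
          push_proper G k hk I hI β hβ S hS⟩,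
        p.length ≤ S.card := by
  intro S
  induction S using Finset.induction_on with
  | empty =>
    intro hS
    have : β = ⟨fun v => if v ∈ (∅ : Finset V) then (⟨k - 1, by omega⟩ : Fin k) else β.1 v,
        push_proper G k hk I hI β hβ ∅ hS⟩ := by
      apply Subtype.ext; funext v; simp
    exact ⟨this ▸ SimpleGraph.Walk.nil, by simp; rfl⟩
  | @insert a S ha ih =>
    intro hsub
    have hS : S ⊆ I := fun x hx => hsub (Finset.mem_insert_of_mem hx)
    obtain ⟨p, hp⟩ := ih hS
    have hadj : (recolorGraph G k).Adj
        ⟨fun v => if v ∈ S then (⟨k - 1, by omega⟩ : Fin k) else β.1 v,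
          push_proper G k hk I hI β hβ S hS⟩
        ⟨fun v => if v ∈ insert a S then (⟨k - 1, by omega⟩ : Fin k) else β.1 v,
          push_proper G k hk I hI β hβ _ hsub⟩ := by
      refine ⟨a, ?_, ?_⟩
      · simp only [ha, if_neg, Finset.mem_insert_self, if_pos]
        intro h
        have := hβ a
        have h2 := congrArg Fin.val h
        simp at h2
        omega
      · intro y hy
        simp only [Finset.mem_insert]
        have : (y = a ∨ y ∈ S) ↔ y ∈ S := by
          constructor
          · rintro (rfl | h); exact absurd rfl hy; assumption
          · exact Or.inr
        rw [if_congr this rfl rfl]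
    exact ⟨p.concat hadj, (SimpleGraph.Walk.length_concat p hadj).trans_le (by
      rw [Finset.card_insert_of_notMem ha]; omega)⟩

lemma lift_restrict (hI : ∀ u ∈ I, ∀ v ∈ I, ¬ G.Adj u v)
    (β : ProperKColoring G k) (hβ : ∀ v, (β.1 v : ℕ) < k - 1) :
    liftColoring G k hk I hI (restrictColoring G k I β hβ) =
      ⟨fun v => if v ∈ I then (⟨k - 1, by omega⟩ : Fin k) else β.1 v,
        push_proper G k hk I hI β hβ I (Finset.Subset.refl I)⟩ := by
  apply Subtype.ext
  funext v
  by_cases hv : v ∈ I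
  · simp [liftColoring, hv]
  · simp only [liftColoring, dif_neg hv, if_neg hv]
    apply Fin.ext
    simp [restrictColoring]

end Aux

/-- If every `k`-coloring of `G` is at distance at most `m` in `R_k(G)` from a `k`-coloring
avoiding the last color (i.e. using only colors `{1, …, k-1}`), then for every independent
set `I` in `G`, if `R_{k-1}(G - I)` has diameter at most `D`, then `R_k(G)` has diameter at
most `2 * (m + |I|) + D`. -/
theorem diameter_recolor_of_free_color {V : Type*} [Fintype V] [DecidableEq V]
    (G : SimpleGraph V) (k m D : ℕ) (hk : 1 ≤ k) (hm : 1 ≤ m) (hD : 1 ≤ D)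
    (hfree : ∀ α : ProperKColoring G k, ∃ α' : ProperKColoring G k,
      (∀ v : V, (α'.1 v : ℕ) < k - 1) ∧
      ∃ p : (recolorGraph G k).Walk α α', p.length ≤ m)
    (I : Finset V) (hI : ∀ u ∈ I, ∀ v ∈ I, ¬ G.Adj u v)
    (hdiam : ∀ β β' : ProperKColoring (G.induce ((I : Set V)ᶜ)) (k - 1),
      ∃ q : (recolorGraph (G.induce ((I : Set V)ᶜ)) (k - 1)).Walk β β',
        q.length ≤ D) :
    ∀ α α' : ProperKColoring G k,
      ∃ p : (recolorGraph G k).Walk α α', p.length ≤ 2 * (m + I.card) + D := by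
  intro α α'
  obtain ⟨β, hβ, p1, hp1⟩ := hfree α
  obtain ⟨β', hβ', p1', hp1'⟩ := hfree α'
  obtain ⟨p2, hp2⟩ := push_walk G k hk I hI β hβ I (Finset.Subset.refl I)
  obtain ⟨p2', hp2'⟩ := push_walk G k hk I hI β' hβ' I (Finset.Subset.refl I)
  obtain ⟨q, hq⟩ := hdiam (restrictColoring G k I β hβ) (restrictColoring G k I β' hβ')
  have e1 := lift_restrict G k hk I hI β hβ
  have e2 := lift_restrict G k hk I hI β' hβ'
  let qq := (SimpleGraph.Walk.map (liftHom G k hk I hI) q).copy e1 e2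
  refine ⟨p1.append (p2.append (qq.append (p2'.reverse.append p1'.reverse))), ?_⟩
  have hqq : qq.length ≤ D := by
    exact (SimpleGraph.Walk.length_copy _ e1 e2).trans_le ((SimpleGraph.Walk.length_map _ q).trans_le hq)
  simp only [SimpleGraph.Walk.length_append, SimpleGraph.Walk.length_reverse]
  have l1 := SimpleGraph.Walk.length_append p2 (qq.append (p2'.reverse.append p1'.reverse))
  have l2 := SimpleGraph.Walk.length_append qq (p2'.reverse.append p1'.reverse)
  have l3 := SimpleGraph.Walk.length_append p2'.reverse p1'.reverse
  have l4 := SimpleGraph.Walk.length_reverse p2'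
  have l5 := SimpleGraph.Walk.length_reverse p1'
  omega
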